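/- If X is a nonnegative continuous local martingale on [0,T] with X_0 = x that is a strict local martingale (E_x[X_T] < x), then limsup_{n→∞} n · P(sup_{t∈[0,T]} X_t > n) > 0. -/

import Mathlib

open MeasureTheory ProbabilityTheory Filter Set
open scoped ENNReal NNReal

noncomputable section

/-- Standard Brownian motion with respect to a measure `μ`. -/
structure IsBrownianMotion {Ω : Type*} {mΩ : MeasurableSpace Ω} (μ : Measure Ω)
    (W : ℝ → Ω → ℝ) : Prop where
  meas : ∀ t, Measurable (W t)
  init : ∀ᵐ ω ∂μ, W 0 ω = 0
  cont : ∀ᵐ ω ∂μ, Continuous fun t => W t ω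
  incr : ∀ s t : ℝ, 0 ≤ s → s ≤ t →
    μ.map (fun ω => W t ω - W s ω) = gaussianReal 0 (Real.toNNReal (t - s))
  indep : ∀ n : ℕ, ∀ u : ℕ → ℝ, Monotone u → (∀ i, 0 ≤ u i) →
    iIndepFun
      (fun i : Fin n => fun ω => W (u (i + 1)) ω - W (u i) ω) μ

/-- Riemann sum along dyadic partitions approximating the Itô integral `∫_0^t H dW`. -/
def itoSum {Ω : Type*} (H W : ℝ → Ω → ℝ) (t : ℝ) (n : ℕ) (ω : Ω) : ℝ :=
  ∑ k ∈ Finset.range (2 ^ n),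
    H (t * k / 2 ^ n) ω * (W (t * (k + 1) / 2 ^ n) ω - W (t * k / 2 ^ n) ω)

/-- `I` is the Itô integral process `∫_0^t H dW`: the dyadic Riemann sums converge in
probability to `I t` for every `t ≥ 0`. -/
def IsItoIntegral {Ω : Type*} {mΩ : MeasurableSpace Ω} (μ : Measure Ω)
    (H W I : ℝ → Ω → ℝ) : Prop :=
  ∀ t : ℝ, 0 ≤ t → TendstoInMeasure μ (fun n => itoSum H W t n) atTop (I t)

/-- `X` solves the SDE `dX_t = b(X_t) dt + σ(X_t) dW_t`, `X_0 = x₀`. -/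
def SolvesSDE {Ω : Type*} {mΩ : MeasurableSpace Ω} (μ : Measure Ω)
    (W X : ℝ → Ω → ℝ) (b σ : ℝ → ℝ) (x₀ : ℝ) : Prop :=
  (∀ᵐ ω ∂μ, X 0 ω = x₀) ∧
  ∃ I : ℝ → Ω → ℝ, IsItoIntegral μ (fun t ω => σ (X t ω)) W I ∧
    ∀ t : ℝ, 0 ≤ t → ∀ᵐ ω ∂μ, X t ω = x₀ + (∫ s in (0:ℝ)..t, b (X s ω)) + I t ω

/-- A process is a local martingale if there is a localizing sequence of stopping times. -/
def IsLocalMartingale {Ω : Type*} {mΩ : MeasurableSpace Ω} (μ : Measure Ω)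
    (ℱ : Filtration ℝ mΩ) (X : ℝ → Ω → ℝ) : Prop :=
  ∃ τ : ℕ → Ω → ℝ, (∀ n, IsStoppingTime ℱ (fun ω => (τ n ω : WithTop ℝ))) ∧
    (∀ᵐ ω ∂μ, Tendsto (fun n => τ n ω) atTop atTop) ∧
    ∀ n, Martingale (MeasureTheory.stoppedProcess X (fun ω => (τ n ω : WithTop ℝ))) ℱ μ

/-- A process is a (true) martingale on the time interval `[0, T₀]`. -/
def MartingaleOn {Ω : Type*} {mΩ : MeasurableSpace Ω} (μ : Measure Ω)
    (ℱ : Filtration ℝ mΩ) (X : ℝ → Ω → ℝ) (T₀ : ℝ) : Prop :=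
  Adapted ℱ X ∧ (∀ t ∈ Set.Icc (0:ℝ) T₀, Integrable (X t) μ) ∧
  ∀ s t : ℝ, 0 ≤ s → s ≤ t → t ≤ T₀ → μ[X t | ℱ s] =ᵐ[μ] X s

/-- The cumulative distribution function of the standard normal distribution. -/
def stdNormalCDF (z : ℝ) : ℝ := ∫ x in Set.Iic z, gaussianPDFReal 0 1 x

/-- The modified Bessel function of the second kind of imaginary order `iμ`,
via its real integral representation `K_{iμ}(γ) = ∫_0^∞ e^{-γ cosh t} cos(μ t) dt`. -/
def besselKi (m γ : ℝ) : ℝ :=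
  ∫ t in Set.Ioi (0:ℝ), Real.exp (-γ * Real.cosh t) * Real.cos (m * t)

/-- The modified Bessel function of the first kind of real order `l`. -/
def besselI (l x : ℝ) : ℝ :=
  ∑' n : ℕ, (x / 2) ^ (2 * n) * (x / 2) ^ l / (n.factorial * Real.Gamma (n + l + 1))

/-- Kummer's confluent hypergeometric function `M(a, b, z) = ₁F₁(a; b; z)`. -/
def kummerM (a b z : ℝ) : ℝ :=
  ∑' n : ℕ, ((∏ k ∈ Finset.range n, (a + k)) / (∏ k ∈ Finset.range n, (b + k)))
    * z ^ n / n.factorial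

/-- The function `A_c(γ, τ)` from the SABR martingale defect formula. -/
def Ac (γ τ : ℝ) : ℝ :=
  Real.sqrt (2 * γ / Real.pi ^ 3) * Real.exp (-(γ + τ / 8)) *
    ∫ s in Set.Ioi (0:ℝ),
      (8 * s * Real.sinh (Real.pi * s) / (4 * s ^ 2 + 1)) * besselKi s γ *
        Real.exp (-s ^ 2 * τ / 2)

/-- `Y` solves the SDE `dY_t = b(Y_t) dt + σ(Y_t) dW_t`, `Y_0 = y₀`, up to the
(possibly infinite) explosion time `ζ`. -/
def SolvesSDEUpTo {Ω : Type*} {mΩ : MeasurableSpace Ω} (μ : Measure Ω)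
    (W Y : ℝ → Ω → ℝ) (b σ : ℝ → ℝ) (y₀ : ℝ) (ζ : Ω → ℝ≥0∞) : Prop :=
  (∀ᵐ ω ∂μ, Y 0 ω = y₀) ∧
  ∃ I : ℝ → Ω → ℝ,
    (∀ t : ℝ, 0 ≤ t →
      TendstoInMeasure (μ.restrict {ω | ENNReal.ofReal t < ζ ω})
        (fun n => itoSum (fun u ω => σ (Y u ω)) W t n) atTop (I t)) ∧
    ∀ t : ℝ, 0 ≤ t → ∀ᵐ ω ∂μ.restrict {ω | ENNReal.ofReal t < ζ ω},
      Y t ω = y₀ + (∫ s in (0:ℝ)..t, b (Y s ω)) + I t ω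

/-- The first hitting time of zero of a process, as an extended real number. -/
def hitZeroTime {Ω : Type*} (X : ℝ → Ω → ℝ) (ω : Ω) : ℝ≥0∞ :=
  ⨅ (s : {s : ℝ // 0 ≤ s ∧ X s ω = 0}), ENNReal.ofReal s.1

open scoped Topology

/-!
For a level `a ≥ x`, let `ρ_a` be the first time `X` exceeds `a` in `[0, T]` (or `T`). Up to
`ρ_a` the process stays below `a`, so along a localizing sequence the stopped processes are
bounded and optional stopping survives the limit: `E[X_{ρ_a}] = x`. As `X_{ρ_a} = a` when
`sup_{[0,T]} X > a` and `X_{ρ_a} = X_T` otherwise, this reads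
`a P(sup X > a) = x - E[X_T; sup X ≤ a]`, which tends to `x - E[X_T] > 0` as `a → ∞`.

Optional stopping at `ρ_a` for a continuous-time martingale `M` is reduced to the discrete case
by rounding `ρ_a` up to dyadic grids: the sampled values are conditional expectations of `M_T`,
hence uniformly integrable, and they converge to `M_{ρ_a}` by continuity of the paths.
-/

/-- For continuous `f`, the first time in `[0, T]` at which `f` exceeds `a`, or `T` if there is
none. Only rational times are inspected, so that for an adapted process `{passageTime < t}` is
an event at time `t` whatever its paths. -/
def passageTime (f : ℝ → ℝ) (a T : ℝ) : ℝ :=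
  sInf (insert T (((↑) : ℚ → ℝ) '' {q : ℚ | (q : ℝ) ∈ Icc 0 T ∧ a < f q}))

section PassageTime

variable {f g : ℝ → ℝ} {a T : ℝ}

lemma bddBelow_passageTime_set (hT : 0 ≤ T) :
    BddBelow (insert T (((↑) : ℚ → ℝ) '' {q : ℚ | (q : ℝ) ∈ Icc 0 T ∧ a < f q})) := by
  refine ⟨0, ?_⟩
  rintro _ (rfl | ⟨q, hq, rfl⟩)
  exacts [hT, hq.1.1]

lemma passageTime_nonneg (hT : 0 ≤ T) : 0 ≤ passageTime f a T := by
  refine le_csInf (insert_nonempty _ _) ?_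
  rintro _ (rfl | ⟨q, hq, rfl⟩)
  exacts [hT, hq.1.1]

lemma passageTime_le (hT : 0 ≤ T) : passageTime f a T ≤ T :=
  csInf_le (bddBelow_passageTime_set hT) (mem_insert _ _)

lemma passageTime_le_of_lt {q : ℚ} (hT : 0 ≤ T) (hq : (q : ℝ) ∈ Icc 0 T) (hfq : a < f q) :
    passageTime f a T ≤ q :=
  csInf_le (bddBelow_passageTime_set hT) (mem_insert_of_mem _ ⟨q, ⟨hq, hfq⟩, rfl⟩)

lemma passageTime_lt_iff (hT : 0 ≤ T) {s : ℝ} :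
    passageTime f a T < s ↔ T < s ∨ ∃ q : ℚ, (q : ℝ) ∈ Icc 0 T ∧ a < f q ∧ (q : ℝ) < s := by
  rw [passageTime, csInf_lt_iff (bddBelow_passageTime_set hT) (insert_nonempty _ _)]
  simp only [exists_mem_insert, exists_mem_image, mem_ofPred_eq, and_assoc]

lemma passageTime_congr (h : EqOn f g (Icc 0 T)) : passageTime f a T = passageTime g a T := by
  have : {q : ℚ | (q : ℝ) ∈ Icc 0 T ∧ a < f q} = {q : ℚ | (q : ℝ) ∈ Icc 0 T ∧ a < g q} := by
    ext q
    exact and_congr_right fun hq => by rw [h hq]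
  rw [passageTime, passageTime, this]

lemma passageTime_eq_of_forall_le (h : ∀ t ∈ Icc 0 T, f t ≤ a) : passageTime f a T = T := by
  have : {q : ℚ | (q : ℝ) ∈ Icc 0 T ∧ a < f q} = ∅ :=
    eq_empty_of_forall_notMem fun q hq => (h q hq.1).not_gt hq.2
  rw [passageTime, this, image_empty, insert_empty_eq, csInf_singleton]

lemma exists_rat_mem_Icc_lt_iff (hf : Continuous f) (hT : 0 < T) :
    (∃ q : ℚ, (q : ℝ) ∈ Icc 0 T ∧ a < f q) ↔ ∃ t ∈ Icc 0 T, a < f t := by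
  refine ⟨fun ⟨q, hq, hfq⟩ => ⟨q, hq, hfq⟩, fun ⟨t, ht, hft⟩ => ?_⟩
  have hU : IsOpen {t | a < f t} := isOpen_lt continuous_const hf
  rw [← closure_Ioo hT.ne] at ht
  obtain ⟨u, hu, huT⟩ := mem_closure_iff.1 ht _ hU hft
  obtain ⟨q, hq, hqT⟩ := Rat.denseRange_cast.exists_mem_open (hU.inter isOpen_Ioo) ⟨u, hu, huT⟩
  exact ⟨q, Ioo_subset_Icc_self hqT, hq⟩

lemma apply_passageTime_le (hf : Continuous f) (hT : 0 ≤ T) (h0 : f 0 ≤ a) :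
    f (passageTime f a T) ≤ a := by
  obtain hρ | hρ := (passageTime_nonneg hT : 0 ≤ passageTime f a T).eq_or_lt
  · rwa [← hρ]
  set ρ := passageTime f a T
  have hclosed : IsClosed {t | f t ≤ a} := isClosed_le hf continuous_const
  -- below `ρ`, no rational time exceeds `a`, and these times accumulate at `ρ`
  have hrat : Ioo 0 ρ ∩ range ((↑) : ℚ → ℝ) ⊆ {t | f t ≤ a} := by
    rintro _ ⟨ht, q, rfl⟩
    rw [mem_ofPred_eq]
    by_contra! hfq
    exact (passageTime_le_of_lt hT ⟨ht.1.le, ht.2.le.trans (passageTime_le hT)⟩ hfq).not_gt ht.2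
  have hdense := Rat.denseRange_cast.open_subset_closure_inter (isOpen_Ioo (a := 0) (b := ρ))
  have hρmem : ρ ∈ closure (Ioo 0 ρ) := by
    rw [closure_Ioo hρ.ne]
    exact right_mem_Icc.2 hρ.le
  exact closure_minimal (hdense.trans (closure_minimal hrat hclosed)) hclosed hρmem

lemma apply_passageTime_eq (hf : Continuous f) (hT : 0 < T) (h0 : f 0 ≤ a)
    (hex : ∃ t ∈ Icc 0 T, a < f t) : f (passageTime f a T) = a := by
  set ρ := passageTime f a T
  refine (apply_passageTime_le hf hT.le h0).antisymm (not_lt.1 fun hlt => ?_)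
  obtain ⟨q₀, hq₀, hfq₀⟩ := (exists_rat_mem_Icc_lt_iff hf hT).2 hex
  obtain ⟨δ, hδ, hball⟩ := Metric.mem_nhds_iff.1 ((isOpen_lt hf continuous_const).mem_nhds hlt)
  obtain ⟨q, hρq, hfq, hqδ⟩ : ∃ q : ℚ, ρ ≤ q ∧ a < f q ∧ (q : ℝ) < ρ + δ := by
    rcases (passageTime_lt_iff hT.le).1 (lt_add_of_pos_right ρ hδ) with hTδ | ⟨q, hq, hfq, hqδ⟩
    · exact ⟨q₀, passageTime_le_of_lt hT.le hq₀ hfq₀, hfq₀, hq₀.2.trans_lt hTδ⟩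
    · exact ⟨q, passageTime_le_of_lt hT.le hq hfq, hfq, hqδ⟩
  have hqball : (q : ℝ) ∈ Metric.ball ρ δ := by
    rw [Real.ball_eq_Ioo]
    exact ⟨by linarith, hqδ⟩
  exact (hball hqball).not_gt hfq

-- `0 ≤ a` is needed: for `t ∉ Icc 0 T` the inner supremum is over an empty type, hence `0`.
lemma lt_iSup_Icc_iff (hf : Continuous f) (ha : 0 ≤ a) :
    a < ⨆ t ∈ Icc 0 T, f t ↔ ∃ t ∈ Icc 0 T, a < f t := by
  constructor
  · intro h
    by_contra! hle
    exact h.not_ge (Real.iSup_le (fun t => Real.iSup_le (hle t) ha) ha)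
  · rintro ⟨t, ht, hat⟩
    obtain ⟨C, hC⟩ := (isCompact_Icc (a := 0) (b := T)).bddAbove_image hf.continuousOn
    have hbdd : BddAbove (range fun t => ⨆ (_ : t ∈ Icc 0 T), f t) := by
      refine ⟨max C 0, ?_⟩
      rintro _ ⟨s, rfl⟩
      exact Real.iSup_le (fun hs => (hC ⟨s, hs, rfl⟩).trans (le_max_left _ _)) (le_max_right _ _)
    calc a < f t := hat
      _ = ⨆ (_ : t ∈ Icc 0 T), f t := (ciSup_pos (f := fun _ => f t) ht).symm
      _ ≤ ⨆ t ∈ Icc 0 T, f t := le_ciSup hbdd t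

lemma apply_passageTime_eq_ite (hf : Continuous f) (hT : 0 < T) (ha : 0 ≤ a) (h0 : f 0 ≤ a) :
    f (passageTime f a T) = if a < ⨆ t ∈ Icc 0 T, f t then a else f T := by
  by_cases h : a < ⨆ t ∈ Icc 0 T, f t
  · rw [if_pos h, apply_passageTime_eq hf hT h0 ((lt_iSup_Icc_iff hf ha).1 h)]
  · rw [if_neg h, passageTime_eq_of_forall_le]
    intro t ht
    by_contra! hft
    exact h ((lt_iSup_Icc_iff hf ha).2 ⟨t, ht, hft⟩)

lemma eventually_passageTime_eq (hf : Continuous f) : ∀ᶠ a in atTop, passageTime f a T = T := by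
  obtain ⟨C, hC⟩ := (isCompact_Icc (a := 0) (b := T)).bddAbove_image hf.continuousOn
  filter_upwards [eventually_ge_atTop C] with a ha
  exact passageTime_eq_of_forall_le fun t ht => (hC ⟨t, ht, rfl⟩).trans ha

end PassageTime

def nextGridPoint (h s : ℝ) : ℝ := h * (⌊s / h⌋ + 1)

section NextGridPoint

variable {h s t : ℝ}

lemma lt_nextGridPoint (hh : 0 < h) : s < nextGridPoint h s := by
  rw [nextGridPoint, ← div_lt_iff₀' hh]
  exact Int.lt_floor_add_one _

lemma nextGridPoint_le_add (hh : 0 < h) : nextGridPoint h s ≤ s + h := by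
  rw [nextGridPoint, mul_add_one, add_le_add_iff_right, ← le_div_iff₀' hh]
  exact Int.floor_le _

lemma nextGridPoint_le_iff (hh : 0 < h) : nextGridPoint h s ≤ t ↔ s < h * ⌊t / h⌋ := by
  rw [nextGridPoint, ← le_div_iff₀' hh, ← div_lt_iff₀' hh, ← Int.cast_one, ← Int.cast_add,
    ← Int.le_floor, Int.add_one_le_iff, Int.floor_lt]

lemma countable_range_nextGridPoint : (range (nextGridPoint h)).Countable :=
  (countable_range fun k : ℤ => h * (k + 1)).mono <| by
    rintro _ ⟨s, rfl⟩
    exact ⟨⌊s / h⌋, rfl⟩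

lemma isStoppingTime_nextGridPoint {Ω : Type*} {mΩ : MeasurableSpace Ω} {ℱ : Filtration ℝ mΩ}
    {ρ : Ω → ℝ} (hρ : ∀ t, MeasurableSet[ℱ t] {ω | ρ ω < t}) (hh : 0 < h) :
    IsStoppingTime ℱ fun ω => ((nextGridPoint h (ρ ω) : ℝ) : WithTop ℝ) := by
  intro t
  simp only [WithTop.coe_le_coe, nextGridPoint_le_iff hh]
  refine ℱ.mono ?_ _ (hρ _)
  rw [← le_div_iff₀' hh]
  exact Int.floor_le _

end NextGridPoint

def gridPassageTime (m : ℕ) (f : ℝ → ℝ) (a T : ℝ) : ℝ :=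
  min (nextGridPoint (T / 2 ^ m) (passageTime f a T)) T

section GridPassageTime

variable {f : ℝ → ℝ} {a T : ℝ}

lemma tendsto_gridPassageTime (hT : 0 < T) :
    Tendsto (fun m => gridPassageTime m f a T) atTop (𝓝 (passageTime f a T)) := by
  have hh : ∀ m : ℕ, 0 < T / 2 ^ m := fun m => by positivity
  have hmesh : Tendsto (fun m : ℕ => passageTime f a T + T / 2 ^ m) atTop
      (𝓝 (passageTime f a T)) := by
    simpa using tendsto_const_nhds.add ((tendsto_const_nhds (x := T)).div_atTop
      (tendsto_pow_atTop_atTop_of_one_lt (one_lt_two : (1 : ℝ) < 2)))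
  refine tendsto_of_tendsto_of_tendsto_of_le_of_le tendsto_const_nhds hmesh (fun m => ?_)
    fun m => (min_le_left _ _).trans (nextGridPoint_le_add (hh m))
  exact le_min (lt_nextGridPoint (hh m)).le (passageTime_le hT.le)

variable {Ω : Type*} {mΩ : MeasurableSpace Ω} {μ : Measure Ω} {ℱ : Filtration ℝ mΩ}
  {M : ℝ → Ω → ℝ}

lemma measurableSet_passageTime_lt (hM : StronglyAdapted ℱ M) (hT : 0 ≤ T) (t : ℝ) :
    MeasurableSet[ℱ t] {ω | passageTime (M · ω) a T < t} := by
  have : {ω | passageTime (M · ω) a T < t} =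
      {_ω | T < t} ∪ ⋃ q ∈ {q : ℚ | (q : ℝ) ∈ Icc 0 T ∧ (q : ℝ) < t}, {ω | a < M q ω} := by
    ext ω
    simp only [passageTime_lt_iff hT, mem_union, mem_iUnion, mem_ofPred_eq, exists_prop,
      and_assoc]
    exact or_congr_right (exists_congr fun q => by tauto)
  rw [this]
  exact (MeasurableSet.const _).union <| MeasurableSet.biUnion (to_countable _) fun q hq =>
    ℱ.mono hq.2.le _ (measurableSet_lt measurable_const (hM q).measurable)

lemma isStoppingTime_gridPassageTime (hM : StronglyAdapted ℱ M) (hT : 0 < T) (m : ℕ) :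
    IsStoppingTime ℱ fun ω => ((gridPassageTime m (M · ω) a T : ℝ) : WithTop ℝ) := by
  simp only [gridPassageTime, WithTop.coe_min]
  exact (isStoppingTime_nextGridPoint (measurableSet_passageTime_lt hM hT.le)
    (by positivity)).min_const T

lemma ae_tendsto_apply_gridPassageTime (hT : 0 < T)
    (hcont : ∀ᵐ ω ∂μ, Continuous fun t => M t ω) :
    ∀ᵐ ω ∂μ, Tendsto (fun m => M (gridPassageTime m (M · ω) a T) ω) atTop
      (𝓝 (M (passageTime (M · ω) a T) ω)) := by
  filter_upwards [hcont] with ω hω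
  exact (hω.tendsto _).comp (tendsto_gridPassageTime hT)

end GridPassageTime

namespace MeasureTheory.Martingale

variable {Ω : Type*} {mΩ : MeasurableSpace Ω} {μ : Measure Ω} [IsFiniteMeasure μ]
  {ℱ : Filtration ℝ mΩ} {M : ℝ → Ω → ℝ} {a T : ℝ}

lemma apply_gridPassageTime_ae_eq_condExp (hM : Martingale M ℱ μ) {m : ℕ}
    (hσ : IsStoppingTime ℱ fun ω => ((gridPassageTime m (M · ω) a T : ℝ) : WithTop ℝ)) :
    (fun ω => M (gridPassageTime m (M · ω) a T) ω) =ᵐ[μ] μ[M T | hσ.measurableSpace] := by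
  refine hM.stoppedValue_ae_eq_condExp_of_le_const_of_countable_range _
    (fun ω => WithTop.coe_le_coe.2 (min_le_right _ _)) ?_
  refine ((countable_range_nextGridPoint (h := T / 2 ^ m)).image
    fun s => ((min s T : ℝ) : WithTop ℝ)).mono ?_
  rintro _ ⟨ω, rfl⟩
  exact ⟨_, ⟨_, rfl⟩, rfl⟩

lemma uniformIntegrable_apply_gridPassageTime (hM : Martingale M ℱ μ) (hT : 0 < T) :
    UniformIntegrable (fun m ω => M (gridPassageTime m (M · ω) a T) ω) 1 μ :=
  ((hM.integrable T).uniformIntegrable_condExp fun m =>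
    (isStoppingTime_gridPassageTime hM.stronglyAdapted hT m).measurableSpace_le).ae_eq
    fun _ => (hM.apply_gridPassageTime_ae_eq_condExp _).symm

lemma setIntegral_apply_gridPassageTime (hM : Martingale M ℱ μ) (hT : 0 < T) {B : Set Ω}
    (hB : MeasurableSet[ℱ 0] B) (m : ℕ) :
    ∫ ω in B, M (gridPassageTime m (M · ω) a T) ω ∂μ = ∫ ω in B, M T ω ∂μ := by
  have hσ := isStoppingTime_gridPassageTime (a := a) hM.stronglyAdapted hT m
  have hσ0 : ∀ ω, ((0 : ℝ) : WithTop ℝ) ≤ gridPassageTime m (M · ω) a T := fun ω =>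
    WithTop.coe_le_coe.2 (le_min ((passageTime_nonneg hT.le).trans
      (lt_nextGridPoint (by positivity)).le) hT.le)
  rw [setIntegral_congr_ae (ℱ.le 0 B hB) (by
    filter_upwards [hM.apply_gridPassageTime_ae_eq_condExp hσ] with ω hω _ using hω)]
  exact setIntegral_condExp hσ.measurableSpace_le (hM.integrable T)
    (hσ.le_measurableSpace_of_const_le hσ0 _ hB)

lemma integrable_apply_passageTime (hM : Martingale M ℱ μ) (hT : 0 < T)
    (hcont : ∀ᵐ ω ∂μ, Continuous fun t => M t ω) :
    Integrable (fun ω => M (passageTime (M · ω) a T) ω) μ :=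
  (hM.uniformIntegrable_apply_gridPassageTime hT).integrable_of_ae_tendsto
    (ae_tendsto_apply_gridPassageTime hT hcont)

theorem setIntegral_apply_passageTime (hM : Martingale M ℱ μ) (hT : 0 < T)
    (hcont : ∀ᵐ ω ∂μ, Continuous fun t => M t ω) {B : Set Ω} (hB : MeasurableSet[ℱ 0] B) :
    ∫ ω in B, M (passageTime (M · ω) a T) ω ∂μ = ∫ ω in B, M T ω ∂μ := by
  have hUI := hM.uniformIntegrable_apply_gridPassageTime (a := a) hT
  have hint := hM.integrable_apply_passageTime (a := a) hT hcont
  have hL1 := tendsto_Lp_finite_of_tendsto_ae le_rfl ENNReal.one_ne_top hUI.1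
    (memLp_one_iff_integrable.2 hint) hUI.2.1 (ae_tendsto_apply_gridPassageTime hT hcont)
  have hlim := tendsto_setIntegral_of_L1' _ hint.1
    (Eventually.of_forall fun m => memLp_one_iff_integrable.1 (hUI.memLp m)) hL1 B
  simp only [hM.setIntegral_apply_gridPassageTime hT hB] at hlim
  exact tendsto_nhds_unique hlim tendsto_const_nhds

end MeasureTheory.Martingale

lemma stoppedProcess_coe_apply {ι Ω β : Type*} [LinearOrder ι] [Nonempty ι] (u : ι → Ω → β)
    (τ : Ω → ι) (i : ι) (ω : Ω) :
    stoppedProcess u (fun ω => (τ ω : WithTop ι)) i ω = u (min i (τ ω)) ω := by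
  unfold stoppedProcess
  rw [← WithTop.coe_min]
  rfl

section LocalMartingale

variable {Ω : Type*} {mΩ : MeasurableSpace Ω} {μ : Measure Ω} {ℱ : Filtration ℝ mΩ}
  {X : ℝ → Ω → ℝ} {τ : Ω → ℝ} {x a T : ℝ}

lemma continuous_stoppedProcess_coe {ω : Ω} (hX : Continuous fun t => X t ω) :
    Continuous fun t => stoppedProcess X (fun ω => (τ ω : WithTop ℝ)) t ω := by
  simp only [stoppedProcess_coe_apply]
  exact hX.comp (continuous_id.min continuous_const)

lemma apply_passageTime_stoppedProcess_coe {ω : Ω} (hT : 0 ≤ T) (hτ : T < τ ω) :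
    stoppedProcess X (fun ω => (τ ω : WithTop ℝ))
      (passageTime (stoppedProcess X (fun ω => (τ ω : WithTop ℝ)) · ω) a T) ω =
      X (passageTime (X · ω) a T) ω := by
  have hpath : EqOn (stoppedProcess X (fun ω => (τ ω : WithTop ℝ)) · ω) (X · ω) (Icc 0 T) :=
    fun t ht => by simp only [stoppedProcess_coe_apply, min_eq_left (ht.2.trans hτ.le)]
  rw [passageTime_congr hpath, stoppedProcess_coe_apply,
    min_eq_left ((passageTime_le hT).trans hτ.le)]

lemma apply_passageTime_stoppedProcess_coe_mem_Icc {ω : Ω} (hc : Continuous fun t => X t ω)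
    (hnn : ∀ t, 0 ≤ X t ω) (hτ : 0 < τ ω) (h0 : X 0 ω ≤ a) (hT : 0 ≤ T) :
    stoppedProcess X (fun ω => (τ ω : WithTop ℝ))
      (passageTime (stoppedProcess X (fun ω => (τ ω : WithTop ℝ)) · ω) a T) ω ∈ Icc 0 a := by
  refine ⟨by rw [stoppedProcess_coe_apply]; exact hnn _, apply_passageTime_le
    (continuous_stoppedProcess_coe hc) hT ?_⟩
  rwa [stoppedProcess_coe_apply, min_eq_left hτ.le]

lemma measurableSet_pos_of_isStoppingTime (hτ : IsStoppingTime ℱ fun ω => (τ ω : WithTop ℝ)) :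
    MeasurableSet[ℱ 0] {ω | 0 < τ ω} := by
  simpa only [compl_ofPred, not_le, WithTop.coe_le_coe] using (hτ 0).compl

lemma IsLocalMartingale.aestronglyMeasurable (hX : IsLocalMartingale μ ℱ X) (t : ℝ) :
    AEStronglyMeasurable (X t) μ := by
  obtain ⟨τ, -, htend, hmart⟩ := hX
  refine aestronglyMeasurable_of_tendsto_ae atTop (fun k => ((hmart k).integrable t).1) ?_
  filter_upwards [htend] with ω hω
  refine tendsto_const_nhds.congr' ?_
  filter_upwards [hω.eventually_ge_atTop t] with k hk
  rw [stoppedProcess_coe_apply, min_eq_left hk]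

lemma IsLocalMartingale.integrable_apply_passageTime [IsFiniteMeasure μ]
    (hX : IsLocalMartingale μ ℱ X) (hnn : ∀ᵐ ω ∂μ, ∀ t, 0 ≤ X t ω)
    (hcont : ∀ᵐ ω ∂μ, Continuous fun t => X t ω) (h0 : ∀ᵐ ω ∂μ, X 0 ω ≤ a) (hT : 0 < T) :
    Integrable (fun ω => X (passageTime (X · ω) a T) ω) μ := by
  obtain ⟨τ, -, htend, hmart⟩ := hX
  have hmeas : AEStronglyMeasurable (fun ω => X (passageTime (X · ω) a T) ω) μ := by
    refine aestronglyMeasurable_of_tendsto_ae atTop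
      (fun k => ((hmart k).integrable_apply_passageTime (a := a) hT
        (by filter_upwards [hcont] with ω hω using continuous_stoppedProcess_coe hω)).1) ?_
    filter_upwards [htend] with ω hω
    refine tendsto_const_nhds.congr' ?_
    filter_upwards [hω.eventually_gt_atTop T] with k hk
    exact (apply_passageTime_stoppedProcess_coe hT.le hk).symm
  refine Integrable.of_bound hmeas a ?_
  filter_upwards [hnn, hcont, h0] with ω hω hc h0
  rw [Real.norm_of_nonneg (hω _)]
  exact apply_passageTime_le hc hT.le h0

lemma setIntegral_apply_passageTime_stoppedProcess_coe [IsFiniteMeasure μ]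
    (hτ : IsStoppingTime ℱ fun ω => (τ ω : WithTop ℝ))
    (hmart : Martingale (stoppedProcess X fun ω => (τ ω : WithTop ℝ)) ℱ μ)
    (hcont : ∀ᵐ ω ∂μ, Continuous fun t => X t ω) (h0 : ∀ᵐ ω ∂μ, X 0 ω = x) (hT : 0 < T) :
    ∫ ω in {ω | 0 < τ ω}, stoppedProcess X (fun ω => (τ ω : WithTop ℝ))
      (passageTime (stoppedProcess X (fun ω => (τ ω : WithTop ℝ)) · ω) a T) ω ∂μ =
      μ.real {ω | 0 < τ ω} * x := by
  have hB := measurableSet_pos_of_isStoppingTime hτ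
  rw [hmart.setIntegral_apply_passageTime hT
      (by filter_upwards [hcont] with ω hω using continuous_stoppedProcess_coe hω) hB,
    ← hmart.setIntegral_eq hT.le hB, ← smul_eq_mul, ← setIntegral_const]
  refine setIntegral_congr_ae (ℱ.le 0 _ hB) ?_
  filter_upwards [h0] with ω hω hτω
  rw [stoppedProcess_coe_apply, min_eq_left (le_of_lt hτω), hω]

theorem IsLocalMartingale.integral_apply_passageTime [IsProbabilityMeasure μ]
    (hX : IsLocalMartingale μ ℱ X) (hnn : ∀ᵐ ω ∂μ, ∀ t, 0 ≤ X t ω)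
    (hcont : ∀ᵐ ω ∂μ, Continuous fun t => X t ω) (h0 : ∀ᵐ ω ∂μ, X 0 ω = x) (hxa : x ≤ a)
    (hT : 0 < T) : ∫ ω, X (passageTime (X · ω) a T) ω ∂μ = x := by
  have hint := hX.integrable_apply_passageTime hnn hcont
    (by filter_upwards [h0] with ω hω using hω.trans_le hxa) hT
  obtain ⟨τ, hτ, htend, hmart⟩ := hX
  set M : ℕ → ℝ → Ω → ℝ := fun k => stoppedProcess X fun ω => (τ k ω : WithTop ℝ)
  have hintM : ∀ k, Integrable (fun ω => M k (passageTime (M k · ω) a T) ω) μ := fun k =>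
    (hmart k).integrable_apply_passageTime hT
      (by filter_upwards [hcont] with ω hω using continuous_stoppedProcess_coe hω)
  have hB : ∀ k, MeasurableSet {ω | 0 < τ k ω} := fun k =>
    ℱ.le 0 _ (measurableSet_pos_of_isStoppingTime (hτ k))
  set F : ℕ → Ω → ℝ := fun k =>
    {ω | 0 < τ k ω}.indicator fun ω => M k (passageTime (M k · ω) a T) ω - x
  have hF : ∀ k, Integrable (F k) μ := fun k =>
    ((hintM k).sub (integrable_const x)).indicator (hB k)
  have hF_zero : ∀ k, ∫ ω, F k ω ∂μ = 0 := fun k => by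
    rw [integral_indicator (hB k),
      integral_sub (hintM k).integrableOn (integrable_const x).integrableOn,
      setIntegral_apply_passageTime_stoppedProcess_coe (hτ k) (hmart k) hcont h0 hT,
      setIntegral_const, smul_eq_mul, sub_self]
  have hF_bdd : ∀ k, ∀ᵐ ω ∂μ, ‖F k ω‖ ≤ a + |x| := fun k => by
    filter_upwards [hcont, hnn, h0] with ω hc hω h0
    by_cases hτω : 0 < τ k ω
    · have hM := apply_passageTime_stoppedProcess_coe_mem_Icc hc hω hτω (h0.trans_le hxa) hT.le
      simp only [F, M, indicator_of_mem (show ω ∈ {ω | 0 < τ k ω} from hτω), Real.norm_eq_abs,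
        abs_le]
      constructor <;> linarith [hM.1, hM.2, neg_abs_le x, le_abs_self x]
    · simp only [F, indicator_of_notMem (show ω ∉ {ω | 0 < τ k ω} from hτω), norm_zero]
      linarith [neg_abs_le x]
  have hF_lim : ∀ᵐ ω ∂μ, Tendsto (fun k => F k ω) atTop
      (𝓝 (X (passageTime (X · ω) a T) ω - x)) := by
    filter_upwards [htend] with ω hω
    refine tendsto_const_nhds.congr' ?_
    filter_upwards [hω.eventually_gt_atTop T] with k hk
    simp only [F, M]
    rw [indicator_of_mem (show ω ∈ {ω | 0 < τ k ω} from hT.trans hk),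
      apply_passageTime_stoppedProcess_coe hT.le hk]
  have hlim := tendsto_integral_of_dominated_convergence _ (fun k => (hF k).1)
    (integrable_const _) hF_bdd hF_lim
  simp only [hF_zero] at hlim
  rw [integral_sub hint (integrable_const x), integral_const, probReal_univ, one_smul] at hlim
  linarith [tendsto_nhds_unique tendsto_const_nhds hlim]

end LocalMartingale

section SupremumTail

variable {Ω : Type*} {mΩ : MeasurableSpace Ω} {μ : Measure Ω} {X : ℝ → Ω → ℝ} {a T : ℝ}

lemma nullMeasurableSet_lt_iSup_Icc (hX : ∀ t, AEStronglyMeasurable (X t) μ)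
    (hcont : ∀ᵐ ω ∂μ, Continuous fun t => X t ω) (ha : 0 ≤ a) (hT : 0 < T) :
    NullMeasurableSet {ω | a < ⨆ t ∈ Icc 0 T, X t ω} μ := by
  refine (NullMeasurableSet.biUnion (to_countable {q : ℚ | (q : ℝ) ∈ Icc 0 T}) fun q _ =>
    nullMeasurableSet_lt (aemeasurable_const (b := a)) (hX q).aemeasurable).congr
      (eventuallyEq_set.2 ?_)
  filter_upwards [hcont] with ω hω
  simp only [mem_iUnion, mem_ofPred_eq, exists_prop, lt_iSup_Icc_iff hω ha]
  exact exists_rat_mem_Icc_lt_iff hω hT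

lemma integral_apply_passageTime_eq (hX : ∀ t, AEStronglyMeasurable (X t) μ)
    (hcont : ∀ᵐ ω ∂μ, Continuous fun t => X t ω) (h0 : ∀ᵐ ω ∂μ, X 0 ω ≤ a) (ha : 0 ≤ a)
    (hT : 0 < T) (hint : Integrable (fun ω => X (passageTime (X · ω) a T) ω) μ) :
    ∫ ω, X (passageTime (X · ω) a T) ω ∂μ =
      a * μ.real {ω | a < ⨆ t ∈ Icc 0 T, X t ω} +
        ∫ ω in {ω | a < ⨆ t ∈ Icc 0 T, X t ω}ᶜ, X T ω ∂μ := by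
  have hE := nullMeasurableSet_lt_iSup_Icc hX hcont ha hT
  have hite : ∀ᵐ ω ∂μ, X (passageTime (X · ω) a T) ω =
      if a < ⨆ t ∈ Icc 0 T, X t ω then a else X T ω := by
    filter_upwards [hcont, h0] with ω hc h0 using apply_passageTime_eq_ite hc hT ha h0
  rw [← integral_add_compl₀ hE hint,
    setIntegral_congr_ae₀ hE (by filter_upwards [hite] with ω hω hmem using hω.trans (if_pos hmem)),
    setIntegral_congr_ae₀ hE.compl
      (by filter_upwards [hite] with ω hω hmem using hω.trans (if_neg hmem)),
    setIntegral_const, smul_eq_mul, mul_comm]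

lemma tendsto_setIntegral_iSup_Icc_le (hX : ∀ t, AEStronglyMeasurable (X t) μ)
    (hcont : ∀ᵐ ω ∂μ, Continuous fun t => X t ω) (hT : 0 < T) (hXT : Integrable (X T) μ) :
    Tendsto (fun n : ℕ => ∫ ω in {ω | (n : ℝ) < ⨆ t ∈ Icc 0 T, X t ω}ᶜ, X T ω ∂μ) atTop
      (𝓝 (∫ ω, X T ω ∂μ)) := by
  have hmono : Monotone fun n : ℕ => {ω | (n : ℝ) < ⨆ t ∈ Icc 0 T, X t ω}ᶜ := by
    intro m n hmn ω
    simp only [mem_compl_iff, mem_ofPred_eq, not_lt]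
    exact fun h => h.trans (Nat.cast_le.2 hmn)
  have hunion : ⋃ n : ℕ, {ω | (n : ℝ) < ⨆ t ∈ Icc 0 T, X t ω}ᶜ = univ :=
    eq_univ_of_forall fun ω => mem_iUnion.2 <| (exists_nat_ge (⨆ t ∈ Icc 0 T, X t ω)).imp
      fun n hn => by simpa only [mem_compl_iff, mem_ofPred_eq, not_lt] using hn
  simpa only [hunion, Measure.restrict_univ] using tendsto_setIntegral_of_monotone₀
    (fun n => (nullMeasurableSet_lt_iSup_Icc hX hcont n.cast_nonneg hT).compl) hmono
    hXT.integrableOn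

end SupremumTail

lemma integrable_of_tendsto_of_integral_le {Ω : Type*} {mΩ : MeasurableSpace Ω} {μ : Measure Ω}
    {f : ℕ → Ω → ℝ} {g : Ω → ℝ} {C : ℝ} (hf : ∀ n, Integrable (f n) μ)
    (hnn : ∀ n, 0 ≤ᵐ[μ] f n) (hC : ∀ n, ∫ ω, f n ω ∂μ ≤ C)
    (hfg : ∀ᵐ ω ∂μ, Tendsto (fun n => f n ω) atTop (𝓝 (g ω))) : Integrable g μ := by
  refine memLp_one_iff_integrable.1
    ⟨aestronglyMeasurable_of_tendsto_ae _ (fun n => (hf n).1) hfg, ?_⟩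
  refine (Lp.eLpNorm_le_of_ae_tendsto (Eventually.of_forall fun n => ?_) (fun n => (hf n).1)
    hfg).trans_lt (ENNReal.ofReal_lt_top (r := C))
  rw [eLpNorm_one_eq_lintegral_enorm, ← ofReal_integral_norm_eq_lintegral_enorm (hf n)]
  exact ENNReal.ofReal_le_ofReal <|
    (integral_congr_ae ((hnn n).mono fun ω h => Real.norm_of_nonneg h)).trans_le (hC n)

/-- Fatou's lemma along the first passages above `n`, which converge to `T`. -/
lemma IsLocalMartingale.integrable_of_nonneg {Ω : Type*} {mΩ : MeasurableSpace Ω}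
    {μ : Measure Ω} [IsProbabilityMeasure μ] {ℱ : Filtration ℝ mΩ} {X : ℝ → Ω → ℝ} {x T : ℝ}
    (hX : IsLocalMartingale μ ℱ X) (hnn : ∀ᵐ ω ∂μ, ∀ t, 0 ≤ X t ω)
    (hcont : ∀ᵐ ω ∂μ, Continuous fun t => X t ω) (h0 : ∀ᵐ ω ∂μ, X 0 ω = x) (hT : 0 < T) :
    Integrable (X T) μ := by
  obtain ⟨n₀, hn₀⟩ := exists_nat_ge x
  have hxn : ∀ n : ℕ, x ≤ ((n + n₀ : ℕ) : ℝ) := fun n => hn₀.trans (by exact_mod_cast le_add_self)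
  refine integrable_of_tendsto_of_integral_le
    (fun n => hX.integrable_apply_passageTime hnn hcont
      (h0.mono fun ω hω => hω.trans_le (hxn n)) hT)
    (fun n => hnn.mono fun ω hω => hω _)
    (fun n => (hX.integral_apply_passageTime hnn hcont h0 (hxn n) hT).le) ?_
  filter_upwards [hcont] with ω hω
  refine tendsto_const_nhds.congr' ?_
  filter_upwards [(tendsto_natCast_atTop_atTop.comp (tendsto_add_atTop_nat n₀)).eventually
    (eventually_passageTime_eq (T := T) hω)] with n hn
  simp only [Function.comp_apply] at hn
  rw [hn]

theorem IsLocalMartingale.mul_measureReal_lt_iSup_Icc {Ω : Type*} {mΩ : MeasurableSpace Ω}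
    {μ : Measure Ω} [IsProbabilityMeasure μ] {ℱ : Filtration ℝ mΩ} {X : ℝ → Ω → ℝ} {x a T : ℝ}
    (hX : IsLocalMartingale μ ℱ X) (hnn : ∀ᵐ ω ∂μ, ∀ t, 0 ≤ X t ω)
    (hcont : ∀ᵐ ω ∂μ, Continuous fun t => X t ω) (h0 : ∀ᵐ ω ∂μ, X 0 ω = x) (hxa : x ≤ a)
    (ha : 0 ≤ a) (hT : 0 < T) :
    a * μ.real {ω | a < ⨆ t ∈ Icc 0 T, X t ω} =
      x - ∫ ω in {ω | a < ⨆ t ∈ Icc 0 T, X t ω}ᶜ, X T ω ∂μ := by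
  have h0a : ∀ᵐ ω ∂μ, X 0 ω ≤ a := h0.mono fun ω hω => hω.trans_le hxa
  rw [← hX.integral_apply_passageTime hnn hcont h0 hxa hT,
    integral_apply_passageTime_eq hX.aestronglyMeasurable hcont h0a ha hT
      (hX.integrable_apply_passageTime hnn hcont h0a hT), add_sub_cancel_right]

theorem strict_local_martingale_sup_tail_general
    {Ω : Type*} {mΩ : MeasurableSpace Ω} (μ : Measure Ω) [IsProbabilityMeasure μ]
    (ℱ : Filtration ℝ mΩ) (X : ℝ → Ω → ℝ) (x : ℝ)
    (hloc : IsLocalMartingale μ ℱ X)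
    (hnn : ∀ᵐ ω ∂μ, ∀ t : ℝ, 0 ≤ X t ω)
    (hcont : ∀ᵐ ω ∂μ, Continuous fun t => X t ω)
    (h0 : ∀ᵐ ω ∂μ, X 0 ω = x)
    (T : ℝ) (hT : 0 < T)
    (hstrict : (∫ ω, X T ω ∂μ) < x) :
    0 < Filter.atTop.limsup (fun n : ℕ =>
      (n : ℝ) * (μ {ω | (n : ℝ) < ⨆ t ∈ Set.Icc (0:ℝ) T, X t ω}).toReal) := by
  obtain ⟨n₀, hn₀⟩ := exists_nat_ge x
  have hlim : Tendsto (fun n : ℕ => (n : ℝ) * (μ {ω | (n : ℝ) < ⨆ t ∈ Icc 0 T, X t ω}).toReal)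
      atTop (𝓝 (x - ∫ ω, X T ω ∂μ)) := by
    rw [← tendsto_add_atTop_iff_nat n₀]
    refine (tendsto_const_nhds.sub ((tendsto_setIntegral_iSup_Icc_le hloc.aestronglyMeasurable
      hcont hT (hloc.integrable_of_nonneg hnn hcont h0 hT)).comp
        (tendsto_add_atTop_nat n₀))).congr fun n => ?_
    exact (hloc.mul_measureReal_lt_iSup_Icc hnn hcont h0
      (hn₀.trans (by exact_mod_cast le_add_self)) (Nat.cast_nonneg _) hT).symm
  rw [hlim.limsup_eq]
  linarith

/-- Cox-Hobson: a strict local martingale satisfies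
`limsup_n n · P(sup_{t ∈ [0,T]} X_t > n) > 0`. -/
theorem strict_local_martingale_sup_tail
    {Ω : Type*} {mΩ : MeasurableSpace Ω} (μ : Measure Ω) [IsProbabilityMeasure μ]
    (ℱ : Filtration ℝ mΩ) (X : ℝ → Ω → ℝ) (x : ℝ) (hx : 0 < x)
    (hloc : IsLocalMartingale μ ℱ X)
    (hnn : ∀ᵐ ω ∂μ, ∀ t : ℝ, 0 ≤ X t ω)
    (hcont : ∀ᵐ ω ∂μ, Continuous fun t => X t ω)
    (h0 : ∀ᵐ ω ∂μ, X 0 ω = x)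
    (T : ℝ) (hT : 0 < T)
    (hstrict : (∫ ω, X T ω ∂μ) < x) :
    0 < Filter.atTop.limsup (fun n : ℕ =>
      (n : ℝ) * (μ {ω | (n : ℝ) < ⨆ t ∈ Set.Icc (0:ℝ) T, X t ω}).toReal) :=
  strict_local_martingale_sup_tail_general μ ℱ X x hloc hnn hcont h0 T hT hstrict
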